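/- For n ≥ 3, pairwise distinct indices i, j, h, and any a, b, c in an associative ring R with 1, one has the identity [t_{hj}(c), y_{ij}(a,b)] = t_{hi}(cbab)·t_{hj}(-cba - cbaba) in GL(n,R), where y_{ij}(a,b) = [t_{ij}(a), t_{ji}(b)]. -/

import Mathlib

open Matrix
open scoped commutatorElement

/-- `GL(n,R)` over an associative ring `R` with `1`, as units of the matrix ring. -/
abbrev GLn (n : ℕ) (R : Type*) [Ring R] := (Matrix (Fin n) (Fin n) R)ˣ

/-- The elementary transvection `t_{ij}(c) = e + c·e_{ij}`, for `i ≠ j`. -/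
def t {R : Type*} [Ring R] {n : ℕ} (i j : Fin n) (hij : i ≠ j) (c : R) :
    GLn n R :=
  ⟨1 + Matrix.single i j c, 1 - Matrix.single i j c,
   by
    have h0 : single i j c * single i j c = 0 :=
      Matrix.single_mul_single_of_ne (h := hij.symm) ..
    noncomm_ring
    simp [h0],
   by
    have h0 : single i j c * single i j c = 0 :=
      Matrix.single_mul_single_of_ne (h := hij.symm) ..
    noncomm_ring
    simp [h0]⟩

lemma sbm_neg {R : Type*} [Ring R] {m n : ℕ} (i : Fin m) (j : Fin n) (x : R) :
    single i j (-x) = - single i j x := by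
  rw [← neg_one_smul R x, ← smul_single, neg_one_smul]

set_option maxHeartbeats 2000000 in
theorem stmt4 {R : Type*} [Ring R] {n : ℕ} (hn : 3 ≤ n) (i j h : Fin n)
    (hij : i ≠ j) (hhi : h ≠ i) (hhj : h ≠ j) (a b c : R) :
    ⁅t h j hhj c, ⁅t i j hij a, t j i hij.symm b⁆⁆ =
      t h i hhi (c * b * a * b) * t h j hhj (-(c * b * a) - c * b * a * b * a) := by
  set Y := ⁅t i j hij a, t j i hij.symm b⁆ with hYdef
  have hYval : Y.val =
      1 + single i i (a*b + a*b*a*b) - single j j (b*a)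
        - single i j (a*b*a) + single j i (b*a*b) := by
    rw [hYdef]
    simp only [commutatorElement_def, Units.val_mul, t, Units.inv_mk, Units.val_mk]
    noncomm_ring
    simp [single_mul_single_same, single_mul_single_of_ne, hij, hij.symm, mul_assoc]
    simp only [single_add, ← smul_single]
    abel
  have key : (t h j hhj c) * Y =
      (t h i hhi (c * b * a * b) * t h j hhj (-(c * b * a) - c * b * a * b * a)) * Y
        * (t h j hhj c) := by
    apply Units.ext
    simp only [Units.val_mul, hYval, t, Units.val_mk]
    noncomm_ring
    simp [single_mul_single_same, single_mul_single_of_ne, hij, hij.symm, hhi, hhj,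
      hhi.symm, hhj.symm, mul_assoc, smul_eq_mul, neg_mul, mul_neg, add_mul, mul_add,
      neg_add, sbm_neg, single_add]
    abel
  rw [commutatorElement_def, key]
  group
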